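/- arXiv:2505.11395 — 10 statements merged into one kernel-verified Lean document; each statement's English description precedes it below -/
import Mathlib

section
/- Let n ≥ 1 and let p_n be the projection minority operation on P_n = {0,…,n−1}. Then p_n preserves: (a) every unary relation X ⊆ P_n; (b) every relation G ⊆ P_n × P_n that is the graph of a bijection between two subsets of P_n (i.e., for every a there is at most one b with (a,b) ∈ G and for every b at most one a with (a,b) ∈ G); and (c) if n ≥ 2, the ternary relation L = {(x,y,z) ∈ {0,1}³ : x + y + z ≡ 1 (mod 2)}. -/
/-!
`p_n` always returns one of its three arguments, and which one depends only on the pattern of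
equalities among them. A partial bijection `G` preserves equality patterns coordinatewise, so
`p_n` picks the same member of a triple from `G` in both coordinates. On `{0, 1}` the minority
operation is `x + y + z mod 2`, and the parities of its three outputs add up to the sum of the
parities of the three inputs, i.e. to `1 + 1 + 1 ≡ 1`.
-/

/-- The projection minority operation `p_n` on `Fin n`: the minority operation
returning its second argument on triples of pairwise distinct elements. -/
def projMin {n : ℕ} (x y z : Fin n) : Fin n :=
  if x = y then z else if x = z then y else if y = z then x else y

/-- The ternary relation `L = {(x,y,z) ∈ {0,1}³ : x + y + z ≡ 1 (mod 2)}` on `Fin n`. -/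
def parityRel (n : ℕ) : Set (Fin n × Fin n × Fin n) :=
  {t | t.1.val ≤ 1 ∧ t.2.1.val ≤ 1 ∧ t.2.2.val ≤ 1 ∧
        (t.1.val + t.2.1.val + t.2.2.val) % 2 = 1}

lemma projMin_mem {n : ℕ} {X : Set (Fin n)} {x y z : Fin n} (hx : x ∈ X) (hy : y ∈ X)
    (hz : z ∈ X) : projMin x y z ∈ X := by
  unfold projMin
  split_ifs <;> assumption

lemma projMin_prod_mem_of_eq_iff {m n : ℕ} {p q r : Fin m × Fin n}
    (hpq : p.1 = q.1 ↔ p.2 = q.2) (hpr : p.1 = r.1 ↔ p.2 = r.2) (hqr : q.1 = r.1 ↔ q.2 = r.2) :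
    (projMin p.1 q.1 r.1, projMin p.2 q.2 r.2) ∈ ({p, q, r} : Set (Fin m × Fin n)) := by
  unfold projMin
  simp only [hpq, hpr, hqr]
  split_ifs <;> simp

lemma eq_iff_eq_of_mem_partialBijection {m n : ℕ} {G : Set (Fin m × Fin n)}
    (hfun : ∀ a b b', (a, b) ∈ G → (a, b') ∈ G → b = b')
    (hinj : ∀ a a' b, (a, b) ∈ G → (a', b) ∈ G → a = a')
    {p q : Fin m × Fin n} (hp : p ∈ G) (hq : q ∈ G) : p.1 = q.1 ↔ p.2 = q.2 :=
  ⟨fun h ↦ hfun p.1 p.2 q.2 hp (h ▸ hq), fun h ↦ hinj p.1 q.1 p.2 hp (h ▸ hq)⟩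

lemma projMin_val_of_le_one {n : ℕ} {x y z : Fin n} (hx : x.val ≤ 1) (hy : y.val ≤ 1)
    (hz : z.val ≤ 1) : (projMin x y z).val = (x.val + y.val + z.val) % 2 := by
  unfold projMin
  split_ifs <;> simp only [Fin.ext_iff] at * <;> omega

lemma projMin_mem_parityRel {n : ℕ} {p q r : Fin n × Fin n × Fin n} (hp : p ∈ parityRel n)
    (hq : q ∈ parityRel n) (hr : r ∈ parityRel n) :
    (projMin p.1 q.1 r.1, projMin p.2.1 q.2.1 r.2.1, projMin p.2.2 q.2.2 r.2.2)
      ∈ parityRel n := by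
  obtain ⟨hp₁, hp₂, hp₃, hp⟩ := hp
  obtain ⟨hq₁, hq₂, hq₃, hq⟩ := hq
  obtain ⟨hr₁, hr₂, hr₃, hr⟩ := hr
  simp only [parityRel, Set.mem_ofPred_eq, projMin_val_of_le_one hp₁ hq₁ hr₁,
    projMin_val_of_le_one hp₂ hq₂ hr₂, projMin_val_of_le_one hp₃ hq₃ hr₃]
  omega

theorem stmt_0_general (n : ℕ) :
    (∀ X : Set (Fin n), ∀ x₁ x₂ x₃ : Fin n, x₁ ∈ X → x₂ ∈ X → x₃ ∈ X →
        projMin x₁ x₂ x₃ ∈ X) ∧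
    (∀ G : Set (Fin n × Fin n),
        (∀ a b b', (a, b) ∈ G → (a, b') ∈ G → b = b') →
        (∀ a a' b, (a, b) ∈ G → (a', b) ∈ G → a = a') →
        ∀ p q r, p ∈ G → q ∈ G → r ∈ G →
          (projMin p.1 q.1 r.1, projMin p.2 q.2 r.2) ∈ G) ∧
    (2 ≤ n → ∀ p q r, p ∈ parityRel n → q ∈ parityRel n → r ∈ parityRel n →
        (projMin p.1 q.1 r.1, projMin p.2.1 q.2.1 r.2.1,
          projMin p.2.2 q.2.2 r.2.2) ∈ parityRel n) := by
  refine ⟨fun X _ _ _ ↦ projMin_mem, ?_, fun _ _ _ _ ↦ projMin_mem_parityRel⟩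
  intro G hfun hinj p q r hp hq hr
  have hpattern {s t} (hs : s ∈ G) (ht : t ∈ G) : s.1 = t.1 ↔ s.2 = t.2 :=
    eq_iff_eq_of_mem_partialBijection hfun hinj hs ht
  rcases projMin_prod_mem_of_eq_iff (hpattern hp hq) (hpattern hp hr) (hpattern hq hr)
    with h | h | h <;> rw [h] <;> assumption

theorem stmt_0 (n : ℕ) (hn : 1 ≤ n) :
    (∀ X : Set (Fin n), ∀ x₁ x₂ x₃ : Fin n, x₁ ∈ X → x₂ ∈ X → x₃ ∈ X →
        projMin x₁ x₂ x₃ ∈ X) ∧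
    (∀ G : Set (Fin n × Fin n),
        (∀ a b b', (a, b) ∈ G → (a, b') ∈ G → b = b') →
        (∀ a a' b, (a, b) ∈ G → (a', b) ∈ G → a = a') →
        ∀ p q r, p ∈ G → q ∈ G → r ∈ G →
          (projMin p.1 q.1 r.1, projMin p.2 q.2 r.2) ∈ G) ∧
    (2 ≤ n → ∀ p q r, p ∈ parityRel n → q ∈ parityRel n → r ∈ parityRel n →
        (projMin p.1 q.1 r.1, projMin p.2.1 q.2.1 r.2.1,
          projMin p.2.2 q.2.2 r.2.2) ∈ parityRel n) :=
  stmt_0_general n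
end

section
/- Let n ≥ 1 and let p_n be the projection minority operation on P_n = {0,…,n−1}. Then P_n is hereditarily simple with respect to p_n: for every subset B ⊆ P_n and every equivalence relation θ on B such that whenever (a₁,b₁), (a₂,b₂), (a₃,b₃) ∈ θ also (p_n(a₁,a₂,a₃), p_n(b₁,b₂,b₃)) ∈ θ, the relation θ is either the equality relation on B or the full relation B × B. -/
/-!
A congruence identifying two distinct elements `a ≠ b` identifies `a` with every `c ∈ B`:
apply `p_n` to the related pairs `(c, c)`, `(a, b)`, `(b, b)`. For `c ∉ {a, b}` the left-hand
side `p_n(c, a, b)` is a triple of distinct elements, hence equals `a`, while the right-hand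
side is `p_n(c, b, b) = c`.
-/

section

variable {n : ℕ}

theorem projMin_self_right (x y : Fin n) : projMin x y y = x := by
  by_cases hxy : x = y <;> simp [projMin, hxy]

theorem projMin_of_pairwise_ne {x y z : Fin n} (hxy : x ≠ y) (hxz : x ≠ z) (hyz : y ≠ z) :
    projMin x y z = y := by
  simp [projMin, hxy, hxz, hyz]

variable {B : Set (Fin n)} {θ : Fin n → Fin n → Prop}

theorem rel_of_rel_of_ne (hrefl : ∀ a ∈ B, θ a a)
    (hpres : ∀ a₁ b₁ a₂ b₂ a₃ b₃, θ a₁ b₁ → θ a₂ b₂ → θ a₃ b₃ →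
        θ (projMin a₁ a₂ a₃) (projMin b₁ b₂ b₃))
    {a b : Fin n} (hab : θ a b) (hne : a ≠ b) (hb : b ∈ B) {c : Fin n} (hc : c ∈ B) :
    θ a c := by
  by_cases hca : c = a
  · exact hca ▸ hrefl c hc
  by_cases hcb : c = b
  · exact hcb ▸ hab
  have h := hpres c c a b b b (hrefl c hc) hab (hrefl b hb)
  rwa [projMin_of_pairwise_ne hca hcb hne, projMin_self_right] at h

end

theorem stmt_1_general (n : ℕ) (B : Set (Fin n)) (θ : Fin n → Fin n → Prop)
    (hdom : ∀ a b, θ a b → a ∈ B ∧ b ∈ B)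
    (hrefl : ∀ a ∈ B, θ a a)
    (hsymm : ∀ a b, θ a b → θ b a)
    (htrans : ∀ a b c, θ a b → θ b c → θ a c)
    (hpres : ∀ a₁ b₁ a₂ b₂ a₃ b₃, θ a₁ b₁ → θ a₂ b₂ → θ a₃ b₃ →
        θ (projMin a₁ a₂ a₃) (projMin b₁ b₂ b₃)) :
    (∀ a b, θ a b → a = b) ∨ (∀ a ∈ B, ∀ b ∈ B, θ a b) := by
  refine or_iff_not_imp_left.mpr fun hdiag x hx y hy => ?_
  push Not at hdiag
  obtain ⟨a, b, hab, hne⟩ := hdiag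
  have hrel : ∀ c ∈ B, θ a c :=
    fun c hc => rel_of_rel_of_ne hrefl hpres hab hne (hdom a b hab).2 hc
  exact htrans x a y (hsymm a x (hrel x hx)) (hrel y hy)

/-- `P_n` is hereditarily simple: every congruence of a subalgebra `B` is the
equality relation or the full relation on `B`. -/
theorem stmt_1 (n : ℕ) (hn : 1 ≤ n) (B : Set (Fin n)) (θ : Fin n → Fin n → Prop)
    (hdom : ∀ a b, θ a b → a ∈ B ∧ b ∈ B)
    (hrefl : ∀ a ∈ B, θ a a)
    (hsymm : ∀ a b, θ a b → θ b a)
    (htrans : ∀ a b c, θ a b → θ b c → θ a c)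
    (hpres : ∀ a₁ b₁ a₂ b₂ a₃ b₃, θ a₁ b₁ → θ a₂ b₂ → θ a₃ b₃ →
        θ (projMin a₁ a₂ a₃) (projMin b₁ b₂ b₃)) :
    (∀ a b, θ a b → a = b) ∨ (∀ a ∈ B, ∀ b ∈ B, θ a b) :=
  stmt_1_general n B θ hdom hrefl hsymm htrans hpres
end

section
/- Let A be a finite set and let f : A³ → A be a conservative Maltsev operation. Then there exists a conservative minority operation g : A³ → A that lies in the clone generated by f; in particular, for every n ≥ 1, every relation R ⊆ Aⁿ preserved by f is also preserved by g. -/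
/-- `f` is a Maltsev operation. -/
def IsMaltsevOp {α : Type*} (f : α → α → α → α) : Prop :=
  ∀ x y : α, f x x y = y ∧ f y x x = y

/-- `f` is a minority operation. -/
def IsMinorityOp {α : Type*} (f : α → α → α → α) : Prop :=
  ∀ x y : α, f x x y = y ∧ f x y x = y ∧ f y x x = y

/-- `f` is conservative. -/
def IsConservativeOp {α : Type*} (f : α → α → α → α) : Prop :=
  ∀ x y z : α, f x y z = x ∨ f x y z = y ∨ f x y z = z

/-- `f` preserves the `n`-ary relation `R`. -/
def PreservesSet {α : Type*} (f : α → α → α → α) {n : ℕ}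
    (R : Set (Fin n → α)) : Prop :=
  ∀ t₁ t₂ t₃, t₁ ∈ R → t₂ ∈ R → t₃ ∈ R →
    (fun i => f (t₁ i) (t₂ i) (t₃ i)) ∈ R

/-!
The minority operation `g` is an explicit ternary term over `f`. Being a term, `g` lies in
the clone of `f`, i.e. it preserves every relation `f` preserves, and it is conservative
because conservativity is inherited by terms. On a two-element
subset `{x, y}` the Maltsev identities fix `f` except for the values `f x y x` and
`f y x y`, each of which is `x` or `y`; in all four cases `g` satisfies the minority identities.
-/

section

variable {α : Type*}

def minorityOfMaltsev (f : α → α → α → α) (a b c : α) : α :=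
  f a (f a b (f b a b)) (f (f a b c) c (f b a c))

namespace IsConservativeOp

variable {f : α → α → α → α}

theorem apply_mem (hf : IsConservativeOp f) {S : Set α} {a b c : α}
    (ha : a ∈ S) (hb : b ∈ S) (hc : c ∈ S) : f a b c ∈ S := by
  rcases hf a b c with h | h | h <;> rw [h] <;> assumption

theorem minorityOfMaltsev (hf : IsConservativeOp f) :
    IsConservativeOp (minorityOfMaltsev f) := by
  intro x y z
  have hx : x ∈ ({x, y, z} : Set α) := by simp
  have hy : y ∈ ({x, y, z} : Set α) := by simp
  have hz : z ∈ ({x, y, z} : Set α) := by simp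
  exact hf.apply_mem hx (hf.apply_mem hx hy (hf.apply_mem hy hx hy))
    (hf.apply_mem (hf.apply_mem hx hy hz) hz (hf.apply_mem hy hx hz))

end IsConservativeOp

theorem isMinorityOp_minorityOfMaltsev {f : α → α → α → α}
    (hcons : IsConservativeOp f) (hmal : IsMaltsevOp f) :
    IsMinorityOp (minorityOfMaltsev f) := by
  intro x y
  obtain ⟨hxxy, hyxx⟩ := hmal x y
  obtain ⟨hyyx, hxyy⟩ := hmal y x
  have hxxx : f x x x = x := (hmal x x).1
  have hyyy : f y y y = y := (hmal y y).1
  have hxyx : f x y x = x ∨ f x y x = y := by rcases hcons x y x with h | h | h <;> simp [h]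
  have hyxy : f y x y = x ∨ f y x y = y := by rcases hcons y x y with h | h | h <;> simp [h]
  rcases hxyx with hxyx | hxyx <;> rcases hyxy with hyxy | hyxy <;>
    refine ⟨?_, ?_, ?_⟩ <;>
    simp only [minorityOfMaltsev, hxxy, hyxx, hxyy, hxxx, hyyy, hxyx, hyxy]

namespace PreservesSet

variable {n : ℕ} {R : Set (Fin n → α)}

theorem comp {f g₁ g₂ g₃ : α → α → α → α} (hf : PreservesSet f R) (h₁ : PreservesSet g₁ R)
    (h₂ : PreservesSet g₂ R) (h₃ : PreservesSet g₃ R) :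
    PreservesSet (fun a b c => f (g₁ a b c) (g₂ a b c) (g₃ a b c)) R :=
  fun _ _ _ ht₁ ht₂ ht₃ => hf _ _ _ (h₁ _ _ _ ht₁ ht₂ ht₃) (h₂ _ _ _ ht₁ ht₂ ht₃)
    (h₃ _ _ _ ht₁ ht₂ ht₃)

theorem proj₁ : PreservesSet (fun a _ _ => a) R := fun _ _ _ h _ _ => h

theorem proj₂ : PreservesSet (fun _ b _ => b) R := fun _ _ _ _ h _ => h

theorem proj₃ : PreservesSet (fun _ _ c => c) R := fun _ _ _ _ _ h => h

theorem minorityOfMaltsev {f : α → α → α → α} (hf : PreservesSet f R) :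
    PreservesSet (minorityOfMaltsev f) R :=
  hf.comp proj₁ (hf.comp proj₁ proj₂ (hf.comp proj₂ proj₁ proj₂))
    (hf.comp (hf.comp proj₁ proj₂ proj₃) proj₃ (hf.comp proj₂ proj₁ proj₃))

end PreservesSet

end

theorem stmt_2_general {α : Type*} (f : α → α → α → α)
    (hcons : IsConservativeOp f) (hmal : IsMaltsevOp f) :
    ∃ g : α → α → α → α, IsConservativeOp g ∧ IsMinorityOp g ∧
      ∀ (n : ℕ), 1 ≤ n → ∀ R : Set (Fin n → α),
        PreservesSet f R → PreservesSet g R :=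
  ⟨minorityOfMaltsev f, hcons.minorityOfMaltsev, isMinorityOp_minorityOfMaltsev hcons hmal,
    fun _ _ _ hR => hR.minorityOfMaltsev⟩

/-- Carbonnel's lemma: the clone of a conservative Maltsev operation on a finite
set contains a conservative minority operation.  (On a finite set, `g` lies in
the clone generated by `f` iff `g` preserves every finitary relation preserved
by `f`.) -/
theorem stmt_2 {α : Type*} [Fintype α] (f : α → α → α → α)
    (hcons : IsConservativeOp f) (hmal : IsMaltsevOp f) :
    ∃ g : α → α → α → α, IsConservativeOp g ∧ IsMinorityOp g ∧
      ∀ (n : ℕ), 1 ≤ n → ∀ R : Set (Fin n → α),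
        PreservesSet f R → PreservesSet g R :=
  stmt_2_general f hcons hmal
end

section
/- Let f : A³ → A be a conservative minority operation, let α be a congruence of (A;f), let B be an equivalence class of α, and let θ be an equivalence relation on B preserved by f (i.e., a congruence of the subalgebra (B;f)). Then for each b ∈ B, the relation θ_b := {(x,y) ∈ A² : x = y, or x ∈ [b]_θ and y ∈ [b]_θ} is a block congruence of (A;f). -/
/-- `f` preserves the binary relation `θ`. -/
def PreservesRel {α : Type*} (f : α → α → α → α) (θ : α → α → Prop) : Prop :=
  ∀ a₁ b₁ a₂ b₂ a₃ b₃ : α, θ a₁ b₁ → θ a₂ b₂ → θ a₃ b₃ →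
    θ (f a₁ a₂ a₃) (f b₁ b₂ b₃)

/-- A congruence of the algebra `(α; f)`. -/
def IsCong {α : Type*} (f : α → α → α → α) (θ : α → α → Prop) : Prop :=
  Equivalence θ ∧ PreservesRel f θ

/-- A block congruence: a congruence with at most one nontrivial class. -/
def IsBlockCong {α : Type*} (f : α → α → α → α) (θ : α → α → Prop) : Prop :=
  IsCong f θ ∧ ∀ a b c d : α, θ a b → a ≠ b → θ c d → c ≠ d → θ a c

/-- A relation is nontrivial if it relates two distinct elements. -/
def NontrivialRel {α : Type*} (θ : α → α → Prop) : Prop :=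
  ∃ a b, θ a b ∧ a ≠ b

/-- Containment of binary relations. -/
def RelLE {α : Type*} (θ₁ θ₂ : α → α → Prop) : Prop :=
  ∀ x y, θ₁ x y → θ₂ x y

/-- An atomic congruence: a nontrivial congruence such that every nontrivial
congruence contained in it equals it. -/
def IsAtomicCong {α : Type*} (f : α → α → α → α) (θ : α → α → Prop) : Prop :=
  IsCong f θ ∧ NontrivialRel θ ∧
    ∀ θ' : α → α → Prop, IsCong f θ' → NontrivialRel θ' → RelLE θ' θ →
      ∀ x y, θ' x y ↔ θ x y

/-- `(α; f)` is subdirectly irreducible: it has exactly one atomic congruence. -/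
def IsSubdirectlyIrred {α : Type*} (f : α → α → α → α) : Prop :=
  ∃ θ : α → α → Prop, IsAtomicCong f θ ∧
    ∀ θ' : α → α → Prop, IsAtomicCong f θ' → ∀ x y, θ' x y ↔ θ x y

/-!
Write `C = [b]_θ`. Since `θ_b` is an equivalence with `C` as its only nontrivial class, it is a
congruence as soon as every translation `t ↦ f t x y` (and its analogues in the other two
arguments) maps any two elements of `C` either to the same element or into `C`. For a
conservative minority operation this comes from one fact valid for every compatible
symmetric and transitive relation `R`: if `R a a'`, `R x x`, `R y y`, then either
`f a x y = f a' x y`, or `f a x y = a` and `f a' x y = a'`, or `a` is `R`-related to both `x`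
and `y`. Applied to `α` it puts `x, y` into `B`, and applied then to `θ` it puts
`f a x y` and `f a' x y` into `C`.
-/

section

variable {A : Type*} {f : A → A → A → A}

theorem IsConservativeOp.rotate (hcons : IsConservativeOp f) :
    IsConservativeOp (fun x y z => f y z x) := fun x y z => by
  rcases hcons y z x with h | h | h <;> simp [h]

theorem IsMinorityOp.rotate (hmin : IsMinorityOp f) : IsMinorityOp (fun x y z => f y z x) :=
  fun x y => ⟨(hmin x y).2.1, (hmin x y).2.2, (hmin x y).1⟩

theorem PreservesRel.rotate {R : A → A → Prop} (hpres : PreservesRel f R) :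
    PreservesRel (fun x y z => f y z x) R :=
  fun _ _ _ _ _ _ h₁ h₂ h₃ => hpres _ _ _ _ _ _ h₂ h₃ h₁

theorem IsCong.rotate {R : A → A → Prop} (h : IsCong f R) :
    IsCong (fun x y z => f y z x) R :=
  ⟨h.1, h.2.rotate⟩

theorem IsConservativeOp.apply_mem_s3 (hcons : IsConservativeOp f) {C : Set A} {x y z : A}
    (hx : x ∈ C) (hy : y ∈ C) (hz : z ∈ C) : f x y z ∈ C := by
  rcases hcons x y z with h | h | h <;> rw [h] <;> assumption

theorem preservesRel_of_translations {R : A → A → Prop} (hR : Equivalence R)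
    (h₁ : ∀ a a' x y, R a a' → R (f a x y) (f a' x y))
    (h₂ : ∀ a a' x y, R a a' → R (f y a x) (f y a' x))
    (h₃ : ∀ a a' x y, R a a' → R (f x y a) (f x y a')) :
    PreservesRel f R :=
  fun _ _ _ _ _ _ r₁ r₂ r₃ =>
    hR.trans (hR.trans (h₁ _ _ _ _ r₁) (h₂ _ _ _ _ r₂)) (h₃ _ _ _ _ r₃)

theorem IsMinorityOp.apply_eq_or_rel (hmin : IsMinorityOp f) (hcons : IsConservativeOp f)
    {R : A → A → Prop} [Std.Symm R] [IsTrans A R] (hpres : PreservesRel f R)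
    {a a' x y : A} (ha : R a a') (hx : R x x) (hy : R y y) :
    f a x y = f a' x y ∨ (f a x y = a ∧ f a' x y = a') ∨ (R a x ∧ R a y) := by
  have hR (p q r p' q' r' : A) : R p p' → R q q' → R r r' → R (f p q r) (f p' q' r') :=
    hpres _ _ _ _ _ _
  have huv := hR a x y a' x y ha hx hy
  -- In each mixed case one more application of `hpres`, in which a minority identity collapses
  -- one side, relates `a` to the argument not yet reached.
  rcases hcons a x y with hu | hu | hu <;> rcases hcons a' x y with hv | hv | hv <;>
    rw [hu, hv] at huv ⊢
  · exact Or.inr (Or.inl ⟨rfl, rfl⟩)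
  · have := hR a x y x x y huv hx hy
    rw [hu, (hmin x y).1] at this
    exact Or.inr (Or.inr ⟨huv, this⟩)
  · have := hR a x y y x y huv hx hy
    rw [hu, (hmin y x).2.1] at this
    exact Or.inr (Or.inr ⟨this, huv⟩)
  · have hax : R a x := trans_of R ha (symm huv)
    have := hR a x y x x y hax hx hy
    rw [hu, (hmin x y).1] at this
    exact Or.inr (Or.inr ⟨hax, trans_of R hax this⟩)
  · exact Or.inl rfl
  · have := hR a x y a' y y ha huv hy
    rw [hu, (hmin y a').2.2] at this
    have hax : R a x := trans_of R ha (symm this)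
    exact Or.inr (Or.inr ⟨hax, trans_of R hax huv⟩)
  · have hay : R a y := trans_of R ha (symm huv)
    have := hR a x y y x y hay hx hy
    rw [hu, (hmin y x).2.1] at this
    exact Or.inr (Or.inr ⟨trans_of R hay this, hay⟩)
  · have := hR a x y a' x x ha hx huv
    rw [hu, (hmin x a').2.2] at this
    have hay : R a y := trans_of R ha (symm this)
    exact Or.inr (Or.inr ⟨trans_of R hay huv, hay⟩)
  · exact Or.inl rfl

-- The paper's `θ_b` is `blockRel [b]_θ`.
def blockRel (C : Set A) (x y : A) : Prop :=
  x = y ∨ (x ∈ C ∧ y ∈ C)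

theorem blockRel_equivalence (C : Set A) : Equivalence (blockRel C) where
  refl _ := Or.inl rfl
  symm := by
    rintro _ _ (rfl | ⟨hx, hy⟩)
    exacts [Or.inl rfl, Or.inr ⟨hy, hx⟩]
  trans := by
    rintro _ _ _ (rfl | ⟨hx, hy⟩) (rfl | ⟨hy', hz⟩)
    exacts [Or.inl rfl, Or.inr ⟨hy', hz⟩, Or.inr ⟨hx, hy⟩, Or.inr ⟨hx, hz⟩]

theorem blockRel_block (C : Set A) (a b c d : A) (hab : blockRel C a b) (hab' : a ≠ b)
    (hcd : blockRel C c d) (hcd' : c ≠ d) : blockRel C a c := by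
  rcases hab with rfl | ⟨ha, -⟩
  · exact absurd rfl hab'
  rcases hcd with rfl | ⟨hc, -⟩
  · exact absurd rfl hcd'
  exact Or.inr ⟨ha, hc⟩

theorem isBlockCong_blockRel_of_translations {C : Set A}
    (h₁ : ∀ a a' x y, a ∈ C → a' ∈ C → blockRel C (f a x y) (f a' x y))
    (h₂ : ∀ a a' x y, a ∈ C → a' ∈ C → blockRel C (f y a x) (f y a' x))
    (h₃ : ∀ a a' x y, a ∈ C → a' ∈ C → blockRel C (f x y a) (f x y a')) :
    IsBlockCong f (blockRel C) := by
  have lift (g : A → A) (hg : ∀ a a', a ∈ C → a' ∈ C → blockRel C (g a) (g a'))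
      (a a' : A) : blockRel C a a' → blockRel C (g a) (g a') := by
    rintro (rfl | ⟨ha, ha'⟩)
    exacts [Or.inl rfl, hg a a' ha ha']
  refine ⟨⟨blockRel_equivalence C, ?_⟩, blockRel_block C⟩
  exact preservesRel_of_translations (blockRel_equivalence C)
    (fun a a' x y => lift _ (fun a a' => h₁ a a' x y) a a')
    (fun a a' x y => lift _ (fun a a' => h₂ a a' x y) a a')
    (fun a a' x y => lift _ (fun a a' => h₃ a a' x y) a a')

theorem blockRel_apply_of_mem_class (hmin : IsMinorityOp f) (hcons : IsConservativeOp f)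
    {α θ : A → A → Prop} (hα : IsCong f α) {a₀ : A}
    (hdom : ∀ x y, θ x y → α a₀ x ∧ α a₀ y) (hrefl : ∀ x, α a₀ x → θ x x)
    [Std.Symm θ] [IsTrans A θ] (hpres : PreservesRel f θ)
    {b a a' : A} (ha : θ b a) (ha' : θ b a') (x y : A) :
    blockRel {z | θ b z} (f a x y) (f a' x y) := by
  have : Std.Symm α := ⟨fun _ _ => hα.1.symm⟩
  have : IsTrans A α := ⟨fun _ _ _ => hα.1.trans⟩
  have h_corner : f a x y = a ∧ f a' x y = a' → blockRel {z | θ b z} (f a x y) (f a' x y) :=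
    fun ⟨hu, hv⟩ => by rw [hu, hv]; exact Or.inr ⟨ha, ha'⟩
  have hα_aa' : α a a' := trans_of α (symm (hdom b a ha).2) (hdom b a' ha').2
  rcases hmin.apply_eq_or_rel hcons hα.2 hα_aa' (hα.1.refl x) (hα.1.refl y)
    with h | h | ⟨hx, hy⟩
  · exact Or.inl h
  · exact h_corner h
  have hxB : α a₀ x := trans_of α (hdom b a ha).2 hx
  have hyB : α a₀ y := trans_of α (hdom b a ha).2 hy
  rcases hmin.apply_eq_or_rel hcons hpres (trans_of θ (symm ha) ha') (hrefl x hxB)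
    (hrefl y hyB) with h | h | ⟨hx, hy⟩
  · exact Or.inl h
  · exact h_corner h
  exact Or.inr ⟨hcons.apply_mem_s3 ha (trans_of θ ha hx) (trans_of θ ha hy),
    hcons.apply_mem_s3 ha' (trans_of θ ha hx) (trans_of θ ha hy)⟩

end

theorem stmt_3_general {α : Type*} (f : α → α → α → α)
    (hcons : IsConservativeOp f) (hmin : IsMinorityOp f)
    (alpha : α → α → Prop) (halpha : IsCong f alpha)
    (B : Set α) (hB : ∃ a₀, B = {x | alpha a₀ x})
    (θ : α → α → Prop)
    (hdom : ∀ x y, θ x y → x ∈ B ∧ y ∈ B)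
    (hrefl : ∀ x ∈ B, θ x x)
    (hsymm : ∀ x y, θ x y → θ y x)
    (htrans : ∀ x y z, θ x y → θ y z → θ x z)
    (hpres : PreservesRel f θ)
    (b : α) :
    IsBlockCong f (fun x y => x = y ∨ (θ b x ∧ θ b y)) := by
  obtain ⟨a₀, rfl⟩ := hB
  have : Std.Symm θ := ⟨hsymm⟩
  have : IsTrans α θ := ⟨htrans⟩
  exact isBlockCong_blockRel_of_translations
    (fun _ _ x y ha ha' =>
      blockRel_apply_of_mem_class hmin hcons halpha hdom hrefl hpres ha ha' x y)
    (fun _ _ x y ha ha' =>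
      blockRel_apply_of_mem_class hmin.rotate.rotate hcons.rotate.rotate halpha.rotate.rotate
        hdom hrefl hpres.rotate.rotate ha ha' x y)
    (fun _ _ x y ha ha' =>
      blockRel_apply_of_mem_class hmin.rotate hcons.rotate halpha.rotate
        hdom hrefl hpres.rotate ha ha' x y)

/-- Proposition: block congruences inside blocks.  If `B` is a class of a
congruence `alpha` of `(α; f)` and `θ` is a congruence of the subalgebra
`(B; f)`, then for every `b ∈ B` the relation `θ_b` inflating the `θ`-class of
`b` is a block congruence of `(α; f)`. -/
theorem stmt_3 {α : Type*} (f : α → α → α → α)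
    (hcons : IsConservativeOp f) (hmin : IsMinorityOp f)
    (alpha : α → α → Prop) (halpha : IsCong f alpha)
    (B : Set α) (hB : ∃ a₀, B = {x | alpha a₀ x})
    (θ : α → α → Prop)
    (hdom : ∀ x y, θ x y → x ∈ B ∧ y ∈ B)
    (hrefl : ∀ x ∈ B, θ x x)
    (hsymm : ∀ x y, θ x y → θ y x)
    (htrans : ∀ x y z, θ x y → θ y z → θ x z)
    (hpres : PreservesRel f θ)
    (b : α) (hb : b ∈ B) :
    IsBlockCong f (fun x y => x = y ∨ (θ b x ∧ θ b y)) :=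
  stmt_3_general f hcons hmin alpha halpha B hB θ hdom hrefl hsymm htrans hpres b
end

section
/- Let f : A³ → A be a conservative Maltsev operation and let θ₁, θ₂ be block congruences of (A;f). If the classes [a]_{θ₁} and [b]_{θ₂} have a nonempty intersection for some a, b ∈ A, then [a]_{θ₁} ⊆ [b]_{θ₂} or [b]_{θ₂} ⊆ [a]_{θ₁}. -/
section Maltsev

variable {α : Type*} {f : α → α → α → α} {θ θ₁ θ₂ : α → α → Prop}

theorem IsCong.rel_maltsev_left (hθ : IsCong f θ) (hmal : IsMaltsevOp f) {x c : α} (y : α)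
    (hxc : θ x c) : θ (f x c y) y := by
  simpa only [(hmal c y).1] using hθ.2 x c c c y y hxc (hθ.1.refl c) (hθ.1.refl y)

theorem IsCong.rel_maltsev_right (hθ : IsCong f θ) (hmal : IsMaltsevOp f) (x : α) {c y : α}
    (hcy : θ c y) : θ (f x c y) x := by
  simpa only [(hmal y x).2] using hθ.2 x x c y y y (hθ.1.refl x) hcy (hθ.1.refl y)

theorem IsCong.rel_or_rel_of_rel_of_rel (h₁ : IsCong f θ₁) (h₂ : IsCong f θ₂)
    (hcons : IsConservativeOp f) (hmal : IsMaltsevOp f) {x c y : α}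
    (hxc : θ₁ x c) (hcy : θ₂ c y) : θ₁ x y ∨ θ₂ x y := by
  have hd₁ := h₁.rel_maltsev_left hmal y hxc
  have hd₂ := h₂.rel_maltsev_right hmal x hcy
  rcases hcons x c y with h | h | h <;> rw [h] at hd₁ hd₂
  · exact .inl hd₁
  · exact .inl (h₁.1.trans hxc hd₁)
  · exact .inr (h₂.1.symm hd₂)

theorem IsCong.classes_comparable (h₁ : IsCong f θ₁) (h₂ : IsCong f θ₂)
    (hcons : IsConservativeOp f) (hmal : IsMaltsevOp f) {a b : α}
    (hint : ({x | θ₁ a x} ∩ {x | θ₂ b x}).Nonempty) :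
    {x | θ₁ a x} ⊆ {x | θ₂ b x} ∨ {x | θ₂ b x} ⊆ {x | θ₁ a x} := by
  obtain ⟨c, hac, hbc⟩ := hint
  by_contra! ⟨hsub₁, hsub₂⟩
  obtain ⟨x, hax, hbx⟩ := Set.not_subset.mp hsub₁
  obtain ⟨y, hby, hay⟩ := Set.not_subset.mp hsub₂
  have hxc : θ₁ x c := h₁.1.trans (h₁.1.symm hax) hac
  have hcy : θ₂ c y := h₂.1.trans (h₂.1.symm hbc) hby
  rcases h₁.rel_or_rel_of_rel_of_rel h₂ hcons hmal hxc hcy with hxy | hxy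
  · exact hay (h₁.1.trans hax hxy)
  · exact hbx (h₂.1.trans hby (h₂.1.symm hxy))

end Maltsev

/-- Classes of block congruences of a conservative Maltsev algebra that
intersect are comparable. -/
theorem stmt_6 {α : Type*} (f : α → α → α → α)
    (hcons : IsConservativeOp f) (hmal : IsMaltsevOp f)
    (θ₁ θ₂ : α → α → Prop)
    (h₁ : IsBlockCong f θ₁) (h₂ : IsBlockCong f θ₂)
    (a b : α) (hint : ({x | θ₁ a x} ∩ {x | θ₂ b x}).Nonempty) :
    {x | θ₁ a x} ⊆ {x | θ₂ b x} ∨ {x | θ₂ b x} ⊆ {x | θ₁ a x} :=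
  h₁.1.classes_comparable h₂.1 hcons hmal hint
end

section
/- Let A be a finite set with |A| ≥ 2 and let f : A³ → A be a conservative minority operation. Then for every a ∈ A there exists a proper subset B_a ⊊ A with a ∈ B_a such that B_a is an equivalence class of some congruence of (A;f), and every proper subset C ⊊ A with a ∈ C that is an equivalence class of some congruence of (A;f) satisfies C ⊆ B_a; in particular, B_a is the unique maximal such subset. -/
/-! In a conservative minority algebra the relational product of two congruences lies in their
union: for `θ₁ x y` and `θ₂ y z`, the element `f x y z` is `θ₂`-related to `x` and `θ₁`-related
to `z`, and conservativity forces it to be one of `x, y, z`. Hence the union of two congruences is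
again a congruence, whose class of `a` is the union of the two classes of `a`, and that union is
still proper. The proper congruence classes containing `a` are therefore closed under binary
unions; as there are finitely many of them, their union is the greatest one. -/

section

variable {α : Type*} {f : α → α → α → α} {θ θ₁ θ₂ : α → α → Prop}

theorem PreservesRel.of_coordinatewise (hθ : Equivalence θ)
    (h₁ : ∀ x y b c, θ x y → θ (f x b c) (f y b c))
    (h₂ : ∀ x y a c, θ x y → θ (f a x c) (f a y c))
    (h₃ : ∀ x y a b, θ x y → θ (f a b x) (f a b y)) : PreservesRel f θ :=
  fun _ _ _ _ _ _ hab₁ hab₂ hab₃ =>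
    hθ.trans (hθ.trans (h₁ _ _ _ _ hab₁) (h₂ _ _ _ _ hab₂)) (h₃ _ _ _ _ hab₃)

theorem IsCong.eq : IsCong f (Eq : α → α → Prop) :=
  ⟨eq_equivalence, by rintro _ _ _ _ _ _ rfl rfl rfl; rfl⟩

theorem IsCong.class_eq (hθ : IsCong f θ) {a c : α} (ha : θ c a) :
    {x | θ c x} = {x | θ a x} :=
  Set.ext fun _ => ⟨hθ.1.trans (hθ.1.symm ha), hθ.1.trans ha⟩

section ConservativeMinority

variable (hcons : IsConservativeOp f) (hmin : IsMinorityOp f)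
include hcons hmin

theorem IsCong.rel_or_rel_of_rel_of_rel_s8 (h₁ : IsCong f θ₁) (h₂ : IsCong f θ₂) {x y z : α}
    (hxy : θ₁ x y) (hyz : θ₂ y z) : θ₁ x z ∨ θ₂ x z := by
  have hm₂ : θ₂ (f x y z) x := by
    simpa only [(hmin y x).2.2] using
      h₂.2 _ _ _ _ _ _ (h₂.1.refl x) (h₂.1.refl y) (h₂.1.symm hyz)
  have hm₁ : θ₁ (f x y z) z := by
    simpa only [(hmin y z).1] using
      h₁.2 _ _ _ _ _ _ hxy (h₁.1.refl y) (h₁.1.refl z)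
  rcases hcons x y z with hm | hm | hm <;> rw [hm] at hm₁ hm₂
  · exact Or.inl hm₁
  · exact Or.inr (h₂.1.trans (h₂.1.symm hm₂) hyz)
  · exact Or.inr (h₂.1.symm hm₂)

theorem IsCong.sup (h₁ : IsCong f θ₁) (h₂ : IsCong f θ₂) : IsCong f (θ₁ ⊔ θ₂) := by
  have hequiv : Equivalence (θ₁ ⊔ θ₂) := by
    refine ⟨fun x => Or.inl (h₁.1.refl x), Or.imp h₁.1.symm h₂.1.symm, ?_⟩
    rintro x y z (hxy | hxy) (hyz | hyz)
    · exact Or.inl (h₁.1.trans hxy hyz)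
    · exact h₁.rel_or_rel_of_rel_of_rel_s8 hcons hmin h₂ hxy hyz
    · exact (h₂.rel_or_rel_of_rel_of_rel_s8 hcons hmin h₁ hxy hyz).symm
    · exact Or.inr (h₂.1.trans hxy hyz)
  refine ⟨hequiv, .of_coordinatewise hequiv ?_ ?_ ?_⟩
  · exact fun x y b c => Or.imp (h₁.2 x y b b c c · (h₁.1.refl b) (h₁.1.refl c))
      (h₂.2 x y b b c c · (h₂.1.refl b) (h₂.1.refl c))
  · exact fun x y a c => Or.imp (h₁.2 a a x y c c (h₁.1.refl a) · (h₁.1.refl c))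
      (h₂.2 a a x y c c (h₂.1.refl a) · (h₂.1.refl c))
  · exact fun x y a b => Or.imp (h₁.2 a a b b x y (h₁.1.refl a) (h₁.1.refl b) ·)
      (h₂.2 a a b b x y (h₂.1.refl a) (h₂.1.refl b) ·)

theorem IsCong.exists_not_sup_rel (h₁ : IsCong f θ₁) (h₂ : IsCong f θ₂) {a b c : α}
    (hb : ¬ θ₁ a b) (hc : ¬ θ₂ a c) : ∃ u, ¬ (θ₁ ⊔ θ₂) a u := by
  by_contra! hcover
  have hab : θ₂ a b := (hcover b).resolve_left hb
  have hac : θ₁ a c := (hcover c).resolve_right hc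
  rcases h₁.rel_or_rel_of_rel_of_rel_s8 hcons hmin h₂ (h₁.1.symm hac) hab with hcb | hcb
  · exact hb (h₁.1.trans hac hcb)
  · exact hc (h₂.1.trans hab (h₂.1.symm hcb))

end ConservativeMinority

def properCongClasses (f : α → α → α → α) (a : α) : Set (Set α) :=
  {C | C ≠ Set.univ ∧ a ∈ C ∧ ∃ θ, IsCong f θ ∧ ∃ c, C = {x | θ c x}}

theorem exists_cong_of_mem_properCongClasses {a : α} {C : Set α}
    (hC : C ∈ properCongClasses f a) :
    ∃ θ, IsCong f θ ∧ C = {x | θ a x} ∧ ∃ b, ¬ θ a b := by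
  obtain ⟨hne, haC, θ, hθ, c, rfl⟩ := hC
  rw [hθ.class_eq haC] at hne ⊢
  exact ⟨θ, hθ, rfl, by simpa [Set.eq_univ_iff_forall] using hne⟩

theorem supClosed_properCongClasses (hcons : IsConservativeOp f) (hmin : IsMinorityOp f)
    (a : α) : SupClosed (properCongClasses f a) := by
  intro C₁ hC₁ C₂ hC₂
  obtain ⟨θ₁, h₁, rfl, b, hb⟩ := exists_cong_of_mem_properCongClasses hC₁
  obtain ⟨θ₂, h₂, rfl, c, hc⟩ := exists_cong_of_mem_properCongClasses hC₂
  obtain ⟨u, hu⟩ := h₁.exists_not_sup_rel hcons hmin h₂ hb hc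
  exact ⟨fun h => hu (Set.eq_univ_iff_forall.1 h u), Or.inl (h₁.1.refl a), θ₁ ⊔ θ₂,
    h₁.sup hcons hmin h₂, a, rfl⟩

theorem singleton_mem_properCongClasses [Nontrivial α] (a : α) :
    {x | a = x} ∈ properCongClasses f a := by
  obtain ⟨b, hba⟩ := exists_ne a
  exact ⟨fun h => hba (Set.eq_univ_iff_forall.1 h b).symm, rfl, Eq, IsCong.eq, a, rfl⟩

end

/-- For every `a` there is a unique maximal proper subset `B_a ∋ a` that is a
class of a congruence of `(α; f)`. -/
theorem stmt_8 {α : Type*} [Fintype α] (hcard : 2 ≤ Fintype.card α)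
    (f : α → α → α → α)
    (hcons : IsConservativeOp f) (hmin : IsMinorityOp f) (a : α) :
    ∃ B : Set α, B ≠ Set.univ ∧ a ∈ B ∧
      (∃ θ : α → α → Prop, IsCong f θ ∧ ∃ c, B = {x | θ c x}) ∧
      ∀ C : Set α, C ≠ Set.univ → a ∈ C →
        (∃ θ : α → α → Prop, IsCong f θ ∧ ∃ c, C = {x | θ c x}) → C ⊆ B := by
  have : Nontrivial α := Fintype.one_lt_card_iff_nontrivial.1 hcard
  have hB : sSup (properCongClasses f a) ∈ properCongClasses f a :=
    (supClosed_properCongClasses hcons hmin a).sSup_mem_of_nonempty (Set.toFinite _)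
      ⟨_, singleton_mem_properCongClasses a⟩ subset_rfl
  exact ⟨_, hB.1, hB.2.1, hB.2.2, fun C hne haC hcong => le_sSup ⟨hne, haC, hcong⟩⟩
end

section
/- Let A be a finite set with |A| ≥ 2 and let f : A³ → A be a conservative minority operation. Then (A;f) has a unique maximal proper congruence: the partially ordered set (under inclusion) of congruences of (A;f) that are different from the full relation A × A has exactly one maximal element. -/
/-! Any two congruences of a Maltsev algebra permute, so `θ₁ ∘ θ₂` is their join. In a
conservative minority algebra the classes of a point under two congruences are comparable:
if `q ∈ [p]θ₁ \ [p]θ₂` and `r ∈ [p]θ₂ \ [p]θ₁`, the value `f p q r` would be `θ₁`-related to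
`r` and `θ₂`-related to `q`, yet it must be one of `p, q, r`. Now let `θ₁ ≠ θ₂` be maximal
proper congruences. Their join is then the full relation, and comparability at a point `a`
with `[a]θ₁ ⊈ [a]θ₂` puts every element into `[a]θ₁`, contradicting properness of `θ₁`.
Existence of a maximal proper congruence is finiteness, the equality relation being proper. -/

section

variable {α : Type*} {f : α → α → α → α} {θ₁ θ₂ : α → α → Prop}

def IsProperCong (f : α → α → α → α) (θ : α → α → Prop) : Prop :=
  IsCong f θ ∧ ¬ ∀ x y, θ x y

lemma IsMinorityOp.isMaltsevOp (hf : IsMinorityOp f) : IsMaltsevOp f :=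
  fun x y => ⟨(hf x y).1, (hf x y).2.2⟩

lemma isCong_eq : IsCong f (· = ·) :=
  ⟨eq_equivalence, by rintro _ _ _ _ _ _ rfl rfl rfl; rfl⟩

lemma isProperCong_eq [Nontrivial α] : IsProperCong f (· = ·) :=
  ⟨isCong_eq, fun h => let ⟨x, y, hxy⟩ := exists_pair_ne α; hxy (h x y)⟩

namespace IsMaltsevOp

variable (hf : IsMaltsevOp f) (h₁ : IsCong f θ₁) (h₂ : IsCong f θ₂)
include hf h₁ h₂

lemma comp_le_comp : RelLE (Relation.Comp θ₂ θ₁) (Relation.Comp θ₁ θ₂) := by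
  rintro x z ⟨y, hxy, hyz⟩
  refine ⟨f x y z, ?_, ?_⟩
  · simpa only [(hf y x).2] using h₁.2 x x y y y z (h₁.1.refl x) (h₁.1.refl y) hyz
  · simpa only [(hf y z).1] using h₂.2 x y y y z z hxy (h₂.1.refl y) (h₂.1.refl z)

lemma isCong_comp : IsCong f (Relation.Comp θ₁ θ₂) := by
  refine ⟨⟨fun x => ⟨x, h₁.1.refl x, h₂.1.refl x⟩, ?_, ?_⟩, ?_⟩
  · rintro x y ⟨m, hxm, hmy⟩
    exact comp_le_comp hf h₁ h₂ y x ⟨m, h₂.1.symm hmy, h₁.1.symm hxm⟩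
  · rintro x y z ⟨m, hxm, hmy⟩ ⟨n, hyn, hnz⟩
    obtain ⟨t, hmt, htn⟩ := comp_le_comp hf h₁ h₂ m n ⟨y, hmy, hyn⟩
    exact ⟨t, h₁.1.trans hxm hmt, h₂.1.trans htn hnz⟩
  · rintro a₁ b₁ a₂ b₂ a₃ b₃ ⟨m₁, hm₁, hm₁'⟩ ⟨m₂, hm₂, hm₂'⟩ ⟨m₃, hm₃, hm₃'⟩
    exact ⟨f m₁ m₂ m₃, h₁.2 _ _ _ _ _ _ hm₁ hm₂ hm₃, h₂.2 _ _ _ _ _ _ hm₁' hm₂' hm₃'⟩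

end IsMaltsevOp

lemma IsConservativeOp.forall_imp_or_forall_imp (hcons : IsConservativeOp f)
    (hmin : IsMinorityOp f) (h₁ : IsCong f θ₁) (h₂ : IsCong f θ₂) (p : α) :
    (∀ q, θ₁ p q → θ₂ p q) ∨ ∀ r, θ₂ p r → θ₁ p r := by
  by_contra! ⟨⟨q, hpq₁, hpq₂⟩, ⟨r, hpr₂, hpr₁⟩⟩
  have hs₁ : θ₁ (f p q r) r := by
    simpa only [(hmin q r).1] using h₁.2 p q q q r r hpq₁ (h₁.1.refl q) (h₁.1.refl r)
  have hs₂ : θ₂ (f p q r) q := by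
    simpa only [(hmin p q).2.1] using
      h₂.2 p p q q r p (h₂.1.refl p) (h₂.1.refl q) (h₂.1.symm hpr₂)
  rcases hcons p q r with h | h | h <;> rw [h] at hs₁ hs₂
  · exact hpr₁ hs₁
  · exact hpr₁ (h₁.1.trans hpq₁ hs₁)
  · exact hpq₂ (h₂.1.trans hpr₂ hs₂)

lemma eq_of_maximal_isProperCong (hcons : IsConservativeOp f) (hmin : IsMinorityOp f)
    (h₁ : Maximal (IsProperCong f) θ₁) (h₂ : Maximal (IsProperCong f) θ₂) : θ₁ = θ₂ := by
  obtain ⟨⟨hc₁, hproper₁⟩, hmax₁⟩ := h₁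
  obtain ⟨⟨hc₂, hproper₂⟩, hmax₂⟩ := h₂
  have e₁ := hc₁.1
  suffices h₂₁ : θ₂ ≤ θ₁ from le_antisymm (hmax₂ ⟨hc₁, hproper₁⟩ h₂₁) h₂₁
  by_contra h₂₁
  obtain ⟨a, b, hab₁, hab₂⟩ : ∃ a b, θ₁ a b ∧ ¬ θ₂ a b := by
    by_contra! h₁₂
    exact h₂₁ (hmax₁ ⟨hc₂, hproper₂⟩ h₁₂)
  have hjoin := hmin.isMaltsevOp.isCong_comp hc₁ hc₂
  have hjoin_full : ∀ x y, Relation.Comp θ₁ θ₂ x y := by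
    by_contra hproper
    have hle := hmax₁ ⟨hjoin, hproper⟩ fun x y h => ⟨y, h, hc₂.1.refl y⟩
    exact h₂₁ fun x y hxy => hle x y ⟨x, e₁.refl x, hxy⟩
  have hclass : ∀ r, θ₂ a r → θ₁ a r :=
    (hcons.forall_imp_or_forall_imp hmin hc₁ hc₂ a).resolve_left fun h => hab₂ (h b hab₁)
  have hto_a : ∀ x, θ₁ x a := fun x =>
    let ⟨m, hxm, hma⟩ := hjoin_full x a
    e₁.trans hxm (e₁.symm (hclass m (hc₂.1.symm hma)))
  exact hproper₁ fun x y => e₁.trans (hto_a x) (e₁.symm (hto_a y))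

lemma maximal_isProperCong_iff {θ : α → α → Prop} :
    Maximal (IsProperCong f) θ ↔ IsCong f θ ∧ ¬ (∀ x y, θ x y) ∧
      ∀ θ' : α → α → Prop, IsCong f θ' → ¬ (∀ x y, θ' x y) → RelLE θ θ' → RelLE θ' θ :=
  ⟨fun h => ⟨h.1.1, h.1.2, fun _ hc hp => h.2 ⟨hc, hp⟩⟩,
    fun h => ⟨⟨h.1, h.2.1⟩, fun _ hθ' => h.2.2 _ hθ'.1 hθ'.2⟩⟩

lemma exists_maximal_isProperCong [Finite α] [Nontrivial α] :
    ∃ θ, Maximal (IsProperCong f) θ :=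
  Set.toFinite {θ | IsProperCong f θ} |>.exists_maximal ⟨_, isProperCong_eq⟩

end

/-- A finite conservative minority algebra with at least two elements has a
unique maximal proper congruence. -/
theorem stmt_9 {α : Type*} [Fintype α] (hcard : 2 ≤ Fintype.card α)
    (f : α → α → α → α)
    (hcons : IsConservativeOp f) (hmin : IsMinorityOp f) :
    ∃ θ : α → α → Prop,
      (IsCong f θ ∧ ¬(∀ x y, θ x y) ∧
        ∀ θ' : α → α → Prop, IsCong f θ' → ¬(∀ x y, θ' x y) →
          RelLE θ θ' → RelLE θ' θ) ∧
      ∀ θ' : α → α → Prop,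
        (IsCong f θ' ∧ ¬(∀ x y, θ' x y) ∧
          ∀ θ'' : α → α → Prop, IsCong f θ'' → ¬(∀ x y, θ'' x y) →
            RelLE θ' θ'' → RelLE θ'' θ') →
        ∀ x y, θ' x y ↔ θ x y := by
  have : Nontrivial α := Fintype.one_lt_card_iff_nontrivial.mp hcard
  obtain ⟨θ, hθ⟩ := exists_maximal_isProperCong (f := f)
  refine ⟨θ, maximal_isProperCong_iff.mp hθ, fun θ' hθ' x y => ?_⟩
  rw [eq_of_maximal_isProperCong hcons hmin (maximal_isProperCong_iff.mpr hθ') hθ]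
end

section
/- Let A and B be sets equipped with Maltsev operations f_A : A³ → A and f_B : B³ → B, and let R ⊆ A × B be subdirect (both projections of R are surjective) and invariant (whenever (a₁,b₁), (a₂,b₂), (a₃,b₃) ∈ R, also (f_A(a₁,a₂,a₃), f_B(b₁,b₂,b₃)) ∈ R). Then C₁ := {(a,a') ∈ A² : ∃ b ∈ B, (a,b) ∈ R and (a',b) ∈ R} is a congruence of (A;f_A), C₂ := {(b,b') ∈ B² : ∃ a ∈ A, (a,b) ∈ R and (a,b') ∈ R} is a congruence of (B;f_B), and there is a bijection η from the set of C₁-classes of A to the set of C₂-classes of B such that η([a]_{C₁}) = [b]_{C₂} for every (a,b) ∈ R and η commutes with the induced quotient operations (η(f̄_A(x,y,z)) = f̄_B(η(x),η(y),η(z)) for all C₁-classes x,y,z, where f̄_A and f̄_B are the well-defined operations induced by f_A and f_B on the quotients). -/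
/-- The first coordinate kernel `R ∘ R⁻¹` of a binary relation. -/
def kerFst {α β : Type*} (R : Set (α × β)) : α → α → Prop :=
  fun a a' => ∃ b, (a, b) ∈ R ∧ (a', b) ∈ R

/-- The second coordinate kernel `R⁻¹ ∘ R` of a binary relation. -/
def kerSnd {α β : Type*} (R : Set (α × β)) : β → β → Prop :=
  fun b b' => ∃ a, (a, b) ∈ R ∧ (a, b') ∈ R

/-!
Because of the Maltsev identities, an invariant relation `R` is rectangular: if `(a, b)`,
`(a, b₀)`, `(a', b₀) ∈ R` then applying the operations coordinatewise to `(a', b₀)`, `(a, b₀)`,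
`(a, b)` yields `(a', b) ∈ R`. Hence the `R`-image of the `kerFst R`-class of `a` is exactly the
`kerSnd R`-class of any `b` with `(a, b) ∈ R`, and conversely equality of these classes forces
`(a, b) ∈ R`. So `[a] ↦ R.image [a]` is a well-defined bijection between the quotients, and it
commutes with the induced operations because `R` is invariant.
-/

lemma Equivalence.setOf_eq_setOf {α : Type*} {r : α → α → Prop} (hr : Equivalence r) {a a' : α}
    (h : r a a') : {x | r a x} = {x | r a' x} :=
  Set.ext fun _ => ⟨hr.trans (hr.symm h), hr.trans h⟩

lemma kerFst_symm {α β : Type*} {R : Set (α × β)} {a a' : α} (h : kerFst R a a') :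
    kerFst R a' a :=
  let ⟨b, hab, ha'b⟩ := h; ⟨b, ha'b, hab⟩

def IsInvariantRel {α β : Type*} (fA : α → α → α → α) (fB : β → β → β → β)
    (R : Set (α × β)) : Prop :=
  ∀ p q r, p ∈ R → q ∈ R → r ∈ R → (fA p.1 q.1 r.1, fB p.2 q.2 r.2) ∈ R

namespace IsInvariantRel

variable {α β : Type*} {fA : α → α → α → α} {fB : β → β → β → β} {R : Set (α × β)}

lemma inv (h : IsInvariantRel fA fB R) : IsInvariantRel fB fA (SetRel.inv R) :=
  fun p q r hp hq hr => h p.swap q.swap r.swap hp hq hr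

lemma preservesRel_kerFst (h : IsInvariantRel fA fB R) : PreservesRel fA (kerFst R) := by
  rintro a₁ c₁ a₂ c₂ a₃ c₃ ⟨b₁, h₁, h₁'⟩ ⟨b₂, h₂, h₂'⟩ ⟨b₃, h₃, h₃'⟩
  exact ⟨fB b₁ b₂ b₃, h (a₁, b₁) (a₂, b₂) (a₃, b₃) h₁ h₂ h₃,
    h (c₁, b₁) (c₂, b₂) (c₃, b₃) h₁' h₂' h₃'⟩

lemma mem_of_kerFst (hA : IsMaltsevOp fA) (hB : IsMaltsevOp fB) (h : IsInvariantRel fA fB R)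
    {a a' : α} {b : β} (hab : (a, b) ∈ R) (haa' : kerFst R a a') : (a', b) ∈ R := by
  obtain ⟨b₀, hab₀, ha'b₀⟩ := haa'
  simpa only [(hA a a').2, (hB b₀ b).1] using h (a', b₀) (a, b₀) (a, b) ha'b₀ hab₀ hab

lemma kerFst_equivalence (hA : IsMaltsevOp fA) (hB : IsMaltsevOp fB) (h : IsInvariantRel fA fB R)
    (hsub : ∀ a, ∃ b, (a, b) ∈ R) : Equivalence (kerFst R) where
  refl a := let ⟨b, hab⟩ := hsub a; ⟨b, hab, hab⟩
  symm := kerFst_symm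
  trans := fun haa' ⟨b, ha'b, ha''b⟩ =>
    ⟨b, h.mem_of_kerFst hA hB ha'b (kerFst_symm haa'), ha''b⟩

lemma isCong_kerFst (hA : IsMaltsevOp fA) (hB : IsMaltsevOp fB) (h : IsInvariantRel fA fB R)
    (hsub : ∀ a, ∃ b, (a, b) ∈ R) : IsCong fA (kerFst R) :=
  ⟨h.kerFst_equivalence hA hB hsub, h.preservesRel_kerFst⟩

lemma isCong_kerSnd (hA : IsMaltsevOp fA) (hB : IsMaltsevOp fB) (h : IsInvariantRel fA fB R)
    (hsub : ∀ b, ∃ a, (a, b) ∈ R) : IsCong fB (kerSnd R) :=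
  h.inv.isCong_kerFst hB hA hsub

lemma image_kerFst_class_eq_iff (hA : IsMaltsevOp fA) (hB : IsMaltsevOp fB)
    (h : IsInvariantRel fA fB R) (hsub : ∀ b, ∃ a, (a, b) ∈ R) {a : α} {b : β} :
    SetRel.image R {x | kerFst R a x} = {y | kerSnd R b y} ↔ (a, b) ∈ R := by
  constructor
  · intro hclass
    obtain ⟨a₀, ha₀b⟩ := hsub b
    obtain ⟨a', haa', ha'b⟩ : b ∈ SetRel.image R {x | kerFst R a x} :=
      hclass ▸ ⟨a₀, ha₀b, ha₀b⟩
    exact h.mem_of_kerFst hA hB ha'b (kerFst_symm haa')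
  · intro hab
    ext y
    constructor
    · rintro ⟨a', haa', ha'y⟩
      exact ⟨a, hab, h.mem_of_kerFst hA hB ha'y (kerFst_symm haa')⟩
    · rintro ⟨a₀, ha₀b, ha₀y⟩
      exact ⟨a₀, ⟨b, hab, ha₀b⟩, ha₀y⟩

lemma bijOn_image_kerFst_classes (hA : IsMaltsevOp fA) (hB : IsMaltsevOp fB)
    (h : IsInvariantRel fA fB R) (hsub₁ : ∀ a, ∃ b, (a, b) ∈ R) (hsub₂ : ∀ b, ∃ a, (a, b) ∈ R) :
    Set.BijOn (SetRel.image R) (Set.range (fun a => {x | kerFst R a x}))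
      (Set.range (fun b => {y | kerSnd R b y})) := by
  have hclass := fun {a b} => h.image_kerFst_class_eq_iff hA hB hsub₂ (a := a) (b := b)
  refine ⟨?_, ?_, ?_⟩
  · rintro _ ⟨a, rfl⟩
    obtain ⟨b, hab⟩ := hsub₁ a
    exact ⟨b, (hclass.mpr hab).symm⟩
  · rintro _ ⟨a, rfl⟩ _ ⟨a', rfl⟩ himage
    obtain ⟨b', ha'b'⟩ := hsub₁ a'
    have hab' : (a, b') ∈ R := hclass.mp (himage.trans (hclass.mpr ha'b'))
    exact (h.kerFst_equivalence hA hB hsub₁).setOf_eq_setOf ⟨b', hab', ha'b'⟩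
  · rintro _ ⟨b, rfl⟩
    obtain ⟨a, hab⟩ := hsub₂ b
    exact ⟨_, ⟨a, rfl⟩, hclass.mpr hab⟩

end IsInvariantRel

/-- For a subdirect invariant binary relation `R` between two Maltsev algebras,
the coordinate kernels are congruences and the quotients are isomorphic via
the map `[a] ↦ [b]` for `(a, b) ∈ R`. -/
theorem stmt_10 {α β : Type*} (fA : α → α → α → α) (fB : β → β → β → β)
    (hA : IsMaltsevOp fA) (hB : IsMaltsevOp fB)
    (R : Set (α × β))
    (hsub₁ : ∀ a, ∃ b, (a, b) ∈ R) (hsub₂ : ∀ b, ∃ a, (a, b) ∈ R)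
    (hinv : ∀ p q r, p ∈ R → q ∈ R → r ∈ R →
        (fA p.1 q.1 r.1, fB p.2 q.2 r.2) ∈ R) :
    IsCong fA (kerFst R) ∧ IsCong fB (kerSnd R) ∧
    ∃ η : Set α → Set β,
      Set.BijOn η (Set.range (fun a => {x | kerFst R a x}))
        (Set.range (fun b => {y | kerSnd R b y})) ∧
      (∀ a b, (a, b) ∈ R → η {x | kerFst R a x} = {y | kerSnd R b y}) ∧
      (∀ a₁ a₂ a₃ b₁ b₂ b₃,
        η {x | kerFst R a₁ x} = {y | kerSnd R b₁ y} →
        η {x | kerFst R a₂ x} = {y | kerSnd R b₂ y} →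
        η {x | kerFst R a₃ x} = {y | kerSnd R b₃ y} →
        η {x | kerFst R (fA a₁ a₂ a₃) x} = {y | kerSnd R (fB b₁ b₂ b₃) y}) := by
  have hR : IsInvariantRel fA fB R := hinv
  have hclass := fun {a b} => hR.image_kerFst_class_eq_iff hA hB hsub₂ (a := a) (b := b)
  refine ⟨hR.isCong_kerFst hA hB hsub₁, hR.isCong_kerSnd hA hB hsub₂, SetRel.image R,
    hR.bijOn_image_kerFst_classes hA hB hsub₁ hsub₂, fun _ _ => hclass.mpr, ?_⟩
  intro a₁ a₂ a₃ b₁ b₂ b₃ h₁ h₂ h₃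
  exact hclass.mpr (hR (a₁, b₁) (a₂, b₂) (a₃, b₃) (hclass.mp h₁) (hclass.mp h₂) (hclass.mp h₃))
end

section
/- Let A be a finite set with a conservative minority operation f, let n ≥ 2, let R ⊆ Aⁿ be invariant under f, and set A_i := π_i(R) for 1 ≤ i ≤ n. Let θ_i be the i-th coordinate kernel of R. Then: (0) each θ_i is a congruence of (A_i; f); (1) if (a₁,…,aₙ) ∈ R and (a_i, b_i) ∈ θ_i for all i, then (b₁,…,bₙ) ∈ R; (2) the induced relation R̄ := {([a₁]_{θ₁},…,[aₙ]_{θₙ}) : (a₁,…,aₙ) ∈ R} on (A₁/θ₁) × ⋯ × (Aₙ/θₙ) is functional and subdirect; and (3) if moreover R is critical, then R̄ is multisorted critical with respect to the operations induced by f on the quotients A_i/θ_i. -/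
/-- An equivalence relation on the subset `B` preserved by `f`, i.e. a
congruence of the subalgebra `(B; f)`. -/
def IsCongOn {α : Type*} (f : α → α → α → α) (B : Set α)
    (θ : α → α → Prop) : Prop :=
  (∀ x y, θ x y → x ∈ B ∧ y ∈ B) ∧ (∀ x ∈ B, θ x x) ∧
    (∀ x y, θ x y → θ y x) ∧ (∀ x y z, θ x y → θ y z → θ x z) ∧
    PreservesRel f θ

/-- An atomic congruence of the subalgebra `(B; f)`. -/
def IsAtomicCongOn {α : Type*} (f : α → α → α → α) (B : Set α)
    (θ : α → α → Prop) : Prop :=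
  IsCongOn f B θ ∧ NontrivialRel θ ∧
    ∀ θ' : α → α → Prop, IsCongOn f B θ' → NontrivialRel θ' → RelLE θ' θ →
      ∀ x y, θ' x y ↔ θ x y

/-- The subalgebra `(B; f)` is subdirectly irreducible. -/
def IsSIOn {α : Type*} (f : α → α → α → α) (B : Set α) : Prop :=
  ∃ μ : α → α → Prop, IsAtomicCongOn f B μ ∧
    ∀ μ' : α → α → Prop, IsAtomicCongOn f B μ' → ∀ x y, μ' x y ↔ μ x y

/-- The projection of `R` onto coordinate `i`. -/
def projCoord {α : Type*} {n : ℕ} (R : Set (Fin n → α)) (i : Fin n) : Set α :=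
  {a | ∃ t ∈ R, t i = a}

/-- The `i`-th coordinate kernel of `R`. -/
def coordKer {α : Type*} {n : ℕ} (R : Set (Fin n → α)) (i : Fin n) :
    α → α → Prop :=
  fun a a' => ∃ t ∈ R, ∃ t' ∈ R, t i = a ∧ t' i = a' ∧ ∀ j, j ≠ i → t j = t' j

/-! Since `f` is a minority operation, `f t u u'` with `u, u' ∈ R` agreeing off `i` equals `t`
off `i` and moves `t i = u i` to `u' i`: coordinate kernels can be followed inside `R` one
coordinate at a time. This gives transitivity of `θᵢ`, saturation of `R`, and functionality of
`R̄`. For criticality, a tuple `s` of the critical cover outside `R` lies in every cylinder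
`{u | u agrees off i with a tuple of R}`, an invariant proper superset of `R` when coordinate `i`
is not dummy; hence `s` has an `i`-approximation in `R` for every `i`. -/

section CoordKer

variable {α : Type*} {f : α → α → α → α} {n : ℕ} {R : Set (Fin n → α)} {i : Fin n}

lemma coordKer_mem_projCoord {a b : α} (h : coordKer R i a b) :
    a ∈ projCoord R i ∧ b ∈ projCoord R i := by
  obtain ⟨t, ht, t', ht', hti, ht'i, -⟩ := h
  exact ⟨⟨t, ht, hti⟩, ⟨t', ht', ht'i⟩⟩

lemma coordKer_refl {a : α} (ha : a ∈ projCoord R i) : coordKer R i a a := by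
  obtain ⟨t, ht, hti⟩ := ha
  exact ⟨t, ht, t, ht, hti, hti, fun _ _ => rfl⟩

lemma coordKer_symm {a b : α} (h : coordKer R i a b) : coordKer R i b a := by
  obtain ⟨t, ht, t', ht', hti, ht'i, hag⟩ := h
  exact ⟨t', ht', t, ht, ht'i, hti, fun j hj => (hag j hj).symm⟩

lemma preservesRel_coordKer (hR : PreservesSet f R) : PreservesRel f (coordKer R i) := by
  rintro a₁ b₁ a₂ b₂ a₃ b₃ ⟨t₁, ht₁, t₁', ht₁', rfl, rfl, hag₁⟩
    ⟨t₂, ht₂, t₂', ht₂', rfl, rfl, hag₂⟩ ⟨t₃, ht₃, t₃', ht₃', rfl, rfl, hag₃⟩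
  refine ⟨_, hR _ _ _ ht₁ ht₂ ht₃, _, hR _ _ _ ht₁' ht₂' ht₃', rfl, rfl, fun j hj => ?_⟩
  simp only [hag₁ j hj, hag₂ j hj, hag₃ j hj]

lemma update_mem_of_coordKer (hmin : IsMinorityOp f) (hR : PreservesSet f R)
    {t : Fin n → α} (ht : t ∈ R) {b : α} (h : coordKer R i (t i) b) :
    Function.update t i b ∈ R := by
  obtain ⟨u, hu, u', hu', hui, hu'i, hag⟩ := h
  convert hR t u u' ht hu hu' using 1
  funext j
  rcases eq_or_ne j i with rfl | hj
  · rw [Function.update_self, hui, hu'i, (hmin _ _).1]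
  · rw [Function.update_of_ne hj, hag j hj, (hmin _ _).2.2]

lemma coordKer_trans (hmin : IsMinorityOp f) (hR : PreservesSet f R) {a b c : α}
    (hab : coordKer R i a b) (hbc : coordKer R i b c) : coordKer R i a c := by
  obtain ⟨t, ht, t', ht', hti, rfl, hag⟩ := hab
  refine ⟨t, ht, Function.update t' i c, update_mem_of_coordKer hmin hR ht' hbc, hti,
    Function.update_self .., fun j hj => ?_⟩
  rw [Function.update_of_ne hj, hag j hj]

lemma isCongOn_coordKer (hmin : IsMinorityOp f) (hR : PreservesSet f R) :
    IsCongOn f (projCoord R i) (coordKer R i) :=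
  ⟨fun _ _ => coordKer_mem_projCoord, fun _ => coordKer_refl, fun _ _ => coordKer_symm,
    fun _ _ _ => coordKer_trans hmin hR, preservesRel_coordKer hR⟩

lemma mem_of_coordKer (hmin : IsMinorityOp f) (hR : PreservesSet f R)
    {t t' : Fin n → α} (ht : t ∈ R) (h : ∀ j, coordKer R j (t j) (t' j)) : t' ∈ R := by
  classical
  suffices ∀ s : Finset (Fin n), s.piecewise t' t ∈ R by
    simpa using this Finset.univ
  intro s
  induction s using Finset.induction_on with
  | empty => simpa using ht
  | insert j s hj ih =>
    rw [Finset.piecewise_insert]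
    refine update_mem_of_coordKer hmin hR ih ?_
    rw [Finset.piecewise_eq_of_notMem _ _ _ hj]
    exact h j

lemma coordKer_of_forall_ne (hmin : IsMinorityOp f) (hR : PreservesSet f R)
    {t t' : Fin n → α} (ht : t ∈ R) (ht' : t' ∈ R)
    (h : ∀ j, j ≠ i → coordKer R j (t j) (t' j)) : coordKer R i (t i) (t' i) := by
  have hu : Function.update t' i (t i) ∈ R := by
    refine mem_of_coordKer hmin hR ht fun j => ?_
    rcases eq_or_ne j i with rfl | hj
    · rw [Function.update_self]
      exact coordKer_refl ⟨t, ht, rfl⟩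
    · rw [Function.update_of_ne hj]
      exact h j hj
  exact ⟨_, hu, t', ht', Function.update_self .., rfl,
    fun j hj => Function.update_of_ne hj _ _⟩

end CoordKer

section Critical

variable {α : Type*} {f : α → α → α → α} {n : ℕ} {R : Set (Fin n → α)}

def cylinder (R : Set (Fin n → α)) (i : Fin n) : Set (Fin n → α) :=
  {u | ∃ t ∈ R, ∀ j, j ≠ i → u j = t j}

lemma preservesSet_cylinder (hR : PreservesSet f R) (i : Fin n) :
    PreservesSet f (cylinder R i) := by
  rintro u₁ u₂ u₃ ⟨t₁, ht₁, hag₁⟩ ⟨t₂, ht₂, hag₂⟩ ⟨t₃, ht₃, hag₃⟩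
  refine ⟨_, hR _ _ _ ht₁ ht₂ ht₃, fun j hj => ?_⟩
  simp only [hag₁ j hj, hag₂ j hj, hag₃ j hj]

lemma ssubset_cylinder {i : Fin n} (hi : ¬ ∀ t ∈ R, ∀ b : α, Function.update t i b ∈ R) :
    R ⊂ cylinder R i := by
  refine ⟨fun t ht => ⟨t, ht, fun _ _ => rfl⟩, fun hsub => hi fun t ht b => hsub ?_⟩
  exact ⟨t, ht, fun j hj => Function.update_of_ne hj b t⟩

lemma exists_approx_of_mem_sInter (hR : PreservesSet f R) {s : Fin n → α}
    (hs : s ∈ ⋂₀ {S : Set (Fin n → α) | PreservesSet f S ∧ R ⊂ S}) {i : Fin n}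
    (hi : ¬ ∀ t ∈ R, ∀ b : α, Function.update t i b ∈ R) :
    ∃ t ∈ R, ∀ j, j ≠ i → t j = s j := by
  obtain ⟨t, ht, hag⟩ := hs _ ⟨preservesSet_cylinder hR i, ssubset_cylinder hi⟩
  exact ⟨t, ht, fun j hj => (hag j hj).symm⟩

lemma mem_projCoord_of_forall_approx (hn : 2 ≤ n) {s : Fin n → α}
    (happrox : ∀ i, ∃ t ∈ R, ∀ j, j ≠ i → t j = s j) (j : Fin n) : s j ∈ projCoord R j := by
  have : Nontrivial (Fin n) := Fin.nontrivial_iff_two_le.mpr hn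
  obtain ⟨i, hij⟩ := exists_ne j
  obtain ⟨t, ht, hag⟩ := happrox i
  exact ⟨t, ht, hag j hij.symm⟩

end Critical

theorem stmt_13_general {α : Type*} (f : α → α → α → α)
    (hmin : IsMinorityOp f)
    (n : ℕ) (hn : 2 ≤ n) (R : Set (Fin n → α)) (hR : PreservesSet f R) :
    (∀ i : Fin n, IsCongOn f (projCoord R i) (coordKer R i)) ∧
    (∀ t ∈ R, ∀ t' : Fin n → α, (∀ i, coordKer R i (t i) (t' i)) → t' ∈ R) ∧
    ((∀ t ∈ R, ∀ t' ∈ R, ∀ i : Fin n,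
        (∀ j, j ≠ i → coordKer R j (t j) (t' j)) →
        ∀ j, coordKer R j (t j) (t' j)) ∧
      (∀ (i : Fin n), ∀ a ∈ projCoord R i, ∃ t ∈ R, coordKer R i (t i) a)) ∧
    (((∀ i : Fin n, ¬ ∀ t ∈ R, ∀ b : α, Function.update t i b ∈ R) ∧
        R ⊂ ⋂₀ {S : Set (Fin n → α) | PreservesSet f S ∧ R ⊂ S}) →
      ∃ s : Fin n → α, (∀ i, s i ∈ projCoord R i) ∧
        (¬ ∃ t ∈ R, ∀ i, coordKer R i (t i) (s i)) ∧
        (∀ S : Set (Fin n → α), (∀ t ∈ S, ∀ i, t i ∈ projCoord R i) →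
          PreservesSet f S →
          (∀ t ∈ S, ∀ t' : Fin n → α,
            (∀ i, coordKer R i (t i) (t' i)) → t' ∈ S) →
          R ⊂ S → ∃ t ∈ S, ∀ i, coordKer R i (t i) (s i)) ∧
        (∀ i : Fin n, ∃ t ∈ R, ∀ j, j ≠ i → coordKer R j (t j) (s j))) := by
  refine ⟨fun _ => isCongOn_coordKer hmin hR, fun _ ht _ => mem_of_coordKer hmin hR ht,
    ⟨fun t ht t' ht' i h j => ?_, fun i _ ⟨t, ht, hta⟩ => ?_⟩, fun ⟨hnodummy, hcrit⟩ => ?_⟩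
  · rcases eq_or_ne j i with rfl | hj
    · exact coordKer_of_forall_ne hmin hR ht ht' h
    · exact h j hj
  · exact ⟨t, ht, hta ▸ coordKer_refl ⟨t, ht, rfl⟩⟩
  obtain ⟨s, hsInter, hsR⟩ := Set.exists_of_ssubset hcrit
  have happrox i := exists_approx_of_mem_sInter hR hsInter (hnodummy i)
  have hproj := mem_projCoord_of_forall_approx hn happrox
  refine ⟨s, hproj, fun ⟨t, ht, h⟩ => hsR (mem_of_coordKer hmin hR ht h),
    fun S _ hS _ hRS => ⟨s, hsInter S ⟨hS, hRS⟩, fun i => coordKer_refl (hproj i)⟩,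
    fun i => ?_⟩
  obtain ⟨t, ht, hag⟩ := happrox i
  exact ⟨t, ht, fun j hj => (hag j hj).symm ▸ coordKer_refl (hproj j)⟩

/-- Lemma on coordinate kernels and the reduced representation `R̄` of `R`:
(0) each coordinate kernel is a congruence of the corresponding projection;
(1) `R` is saturated with respect to the product of its coordinate kernels;
(2) the induced relation `R̄` on the quotients is functional and subdirect
    (stated via representatives);
(3) if `R` is critical, then `R̄` is multisorted critical (stated via
    saturated invariant relations and representatives). -/
theorem stmt_13 {α : Type*} [Fintype α] (f : α → α → α → α)
    (hcons : IsConservativeOp f) (hmin : IsMinorityOp f)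
    (n : ℕ) (hn : 2 ≤ n) (R : Set (Fin n → α)) (hR : PreservesSet f R) :
    (∀ i : Fin n, IsCongOn f (projCoord R i) (coordKer R i)) ∧
    (∀ t ∈ R, ∀ t' : Fin n → α, (∀ i, coordKer R i (t i) (t' i)) → t' ∈ R) ∧
    ((∀ t ∈ R, ∀ t' ∈ R, ∀ i : Fin n,
        (∀ j, j ≠ i → coordKer R j (t j) (t' j)) →
        ∀ j, coordKer R j (t j) (t' j)) ∧
      (∀ (i : Fin n), ∀ a ∈ projCoord R i, ∃ t ∈ R, coordKer R i (t i) a)) ∧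
    (((∀ i : Fin n, ¬ ∀ t ∈ R, ∀ b : α, Function.update t i b ∈ R) ∧
        R ⊂ ⋂₀ {S : Set (Fin n → α) | PreservesSet f S ∧ R ⊂ S}) →
      ∃ s : Fin n → α, (∀ i, s i ∈ projCoord R i) ∧
        (¬ ∃ t ∈ R, ∀ i, coordKer R i (t i) (s i)) ∧
        (∀ S : Set (Fin n → α), (∀ t ∈ S, ∀ i, t i ∈ projCoord R i) →
          PreservesSet f S →
          (∀ t ∈ S, ∀ t' : Fin n → α,
            (∀ i, coordKer R i (t i) (t' i)) → t' ∈ S) →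
          R ⊂ S → ∃ t ∈ S, ∀ i, coordKer R i (t i) (s i)) ∧
        (∀ i : Fin n, ∃ t ∈ R, ∀ j, j ≠ i → coordKer R j (t j) (s j))) :=
  stmt_13_general f hmin n hn R hR
end

section
/- Let A be a finite set with a conservative minority operation f, let n ≥ 3, let A₁,…,Aₙ ⊆ A be subsets such that each subalgebra (A_i;f) is subdirectly irreducible, and let R ⊆ A₁ × ⋯ × Aₙ be a subdirect, functional, multisorted critical relation. For each i let B_i be the nontrivial block of the monolith μ_i of (A_i;f). Then |B_i| = 2 for every i ∈ {1,…,n}. -/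
open Function

section Update

variable {ι α : Type*} [DecidableEq ι]

theorem pointwise_update (f : α → α → α → α) (t₁ t₂ t₃ : ι → α) (i : ι) (b₁ b₂ b₃ : α) :
    (fun a => f (update t₁ i b₁ a) (update t₂ i b₂ a) (update t₃ i b₃ a)) =
      update (fun a => f (t₁ a) (t₂ a) (t₃ a)) i (f b₁ b₂ b₃) := by
  funext a
  by_cases h : a = i
  · subst h; simp
  · simp [h]

end Update

theorem Fin.exists_two_ne_of_three_le {n : ℕ} (hn : 3 ≤ n) (j : Fin n) :
    ∃ k l : Fin n, k ≠ j ∧ l ≠ j ∧ k ≠ l := by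
  have : 1 < (Finset.univ.erase j).card := by
    rw [Finset.card_erase_of_mem (Finset.mem_univ j), Finset.card_univ, Fintype.card_fin]
    omega
  obtain ⟨k, hk, l, hl, hkl⟩ := Finset.one_lt_card.1 this
  exact ⟨k, l, Finset.ne_of_mem_erase hk, Finset.ne_of_mem_erase hl, hkl⟩

theorem ncard_setOf_rel_eq_two {α : Type*} {θ : α → α → Prop} {x y : α} (hx : θ x x)
    (hxy : θ x y) (hne : x ≠ y) (huniq : ∀ z, θ x z → z ≠ x → z = y) : {z | θ x z}.ncard = 2 := by
  have : {z | θ x z} = {x, y} := by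
    ext z
    refine ⟨fun hz => ?_, ?_⟩
    · by_cases hzx : z = x
      · exact Or.inl hzx
      · exact Or.inr (huniq z hz hzx)
    · rintro (rfl | rfl) <;> assumption
  rw [this, Set.ncard_pair hne]

theorem IsMinorityOp.isMaltsevOp_s15 {α : Type*} {f : α → α → α → α} (h : IsMinorityOp f) :
    IsMaltsevOp f :=
  fun x y => ⟨(h x y).1, (h x y).2.2⟩

theorem IsMaltsevOp.isCongOn {α : Type*} {f : α → α → α → α} (hf : IsMaltsevOp f) {D : Set α}
    {θ : α → α → Prop} (hdom : ∀ x y, θ x y → x ∈ D ∧ y ∈ D) (hrefl : ∀ x ∈ D, θ x x)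
    (hpres : PreservesRel f θ) : IsCongOn f D θ := by
  refine ⟨hdom, hrefl, fun x y hxy => ?_, fun x y z hxy hyz => ?_, hpres⟩
  · have hx := hrefl x (hdom x y hxy).1
    have hy := hrefl y (hdom x y hxy).2
    simpa only [(hf x y).1, (hf y x).2] using hpres _ _ _ _ _ _ hx hxy hy
  · have hy := hrefl y (hdom x y hxy).2
    simpa only [(hf y x).2, (hf y z).1] using hpres _ _ _ _ _ _ hxy hy hyz

/-- For a Maltsev operation `f` this is the principal congruence `Cg(a, b)` of `(D; f)`. -/
inductive GenRel {α : Type*} (f : α → α → α → α) (D : Set α) (a b : α) : α → α → Prop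
  | refl {x : α} : x ∈ D → GenRel f D a b x x
  | gen : GenRel f D a b a b
  | map {x₁ y₁ x₂ y₂ x₃ y₃ : α} : GenRel f D a b x₁ y₁ → GenRel f D a b x₂ y₂ →
      GenRel f D a b x₃ y₃ → GenRel f D a b (f x₁ x₂ x₃) (f y₁ y₂ y₃)

namespace GenRel

variable {α : Type*} {f : α → α → α → α} {D : Set α} {a b : α}

theorem le {θ : α → α → Prop} (hrefl : ∀ x ∈ D, θ x x) (hab : θ a b) (hpres : PreservesRel f θ)
    {x y : α} (h : GenRel f D a b x y) : θ x y := by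
  induction h with
  | refl hx => exact hrefl _ hx
  | gen => exact hab
  | map _ _ _ h₁ h₂ h₃ => exact hpres _ _ _ _ _ _ h₁ h₂ h₃

theorem mem (hf : IsConservativeOp f) (ha : a ∈ D) (hb : b ∈ D) {x y : α}
    (h : GenRel f D a b x y) : x ∈ D ∧ y ∈ D :=
  h.le (θ := fun x y => x ∈ D ∧ y ∈ D) (fun x hx => ⟨hx, hx⟩) ⟨ha, hb⟩ <| by
    rintro x₁ y₁ x₂ y₂ x₃ y₃ ⟨hx₁, hy₁⟩ ⟨hx₂, hy₂⟩ ⟨hx₃, hy₃⟩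
    constructor
    · rcases hf x₁ x₂ x₃ with h | h | h <;> rw [h] <;> assumption
    · rcases hf y₁ y₂ y₃ with h | h | h <;> rw [h] <;> assumption

theorem isCongOn (hc : IsConservativeOp f) (hm : IsMaltsevOp f) (ha : a ∈ D) (hb : b ∈ D) :
    IsCongOn f D (GenRel f D a b) :=
  hm.isCongOn (fun _ _ h => h.mem hc ha hb) (fun _ => refl) fun _ _ _ _ _ _ => map

end GenRel

section Relations

variable {α : Type*} {f : α → α → α → α} {n : ℕ}

def IsFunctionalRel (R : Set (Fin n → α)) : Prop :=
  ∀ t ∈ R, ∀ t' ∈ R, ∀ i : Fin n, (∀ j, j ≠ i → t j = t' j) → t = t'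

theorem IsFunctionalRel.update_inj {R : Set (Fin n → α)} (hR : IsFunctionalRel R)
    {t : Fin n → α} {i : Fin n} {b b' : α} (hb : update t i b ∈ R) (hb' : update t i b' ∈ R) :
    b = b' := by
  have := hR _ hb _ hb' i fun a ha => by simp [ha]
  simpa using congrFun this i

def coordNbhd (R : Set (Fin n → α)) : Set (Fin n → α) :=
  {w | ∀ i, ∃ b, update w i b ∈ R}

theorem subset_coordNbhd (R : Set (Fin n → α)) : R ⊆ coordNbhd R :=
  fun t ht i => ⟨t i, by rwa [update_eq_self]⟩

theorem PreservesSet.coordNbhd {R : Set (Fin n → α)} (hR : PreservesSet f R) :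
    PreservesSet f (coordNbhd R) := by
  intro t₁ t₂ t₃ h₁ h₂ h₃ i
  obtain ⟨b₁, hb₁⟩ := h₁ i
  obtain ⟨b₂, hb₂⟩ := h₂ i
  obtain ⟨b₃, hb₃⟩ := h₃ i
  exact ⟨f b₁ b₂ b₃, pointwise_update f t₁ t₂ t₃ i b₁ b₂ b₃ ▸ hR _ _ _ hb₁ hb₂ hb₃⟩

end Relations

section Critical

variable {α : Type*} {f : α → α → α → α} {n : ℕ} {R : Set (Fin n → α)}

theorem mem_or_update_mem_of_mem_coordNbhd (hcons : IsConservativeOp f) (hmin : IsMinorityOp f)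
    (hinv : PreservesSet f R) (hR : IsFunctionalRel R) (hn : 3 ≤ n) {w : Fin n → α} {j : Fin n}
    {t : α} (hw : w ∈ coordNbhd R) (hwt : update w j t ∈ coordNbhd R) (ht : t ≠ w j) :
    w ∈ R ∨ update w j t ∈ R := by
  /- With neighbours `ν i = update w i bᵢ` and `ζ = update (update w j t) k c` in `R`, the tuple
  `f ζ (ν k) (ν l)` lies in `R`; whichever of the values `c, bk, w k` it takes at `k`, it differs
  in a single coordinate from `ζ`, from `f (ν k) (ν l) (ν j)` or from `ν l`. -/
  refine or_iff_not_imp_left.2 fun hwR => ?_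
  have m₁ : ∀ x y, f x x y = y := fun x y => (hmin x y).1
  have m₂ : ∀ x y, f x y x = y := fun x y => (hmin x y).2.1
  have m₃ : ∀ x y, f y x x = y := fun x y => (hmin x y).2.2
  obtain ⟨k, l, hkj, hlj, hkl⟩ := Fin.exists_two_ne_of_three_le hn j
  obtain ⟨bj, hνj⟩ := hw j
  obtain ⟨bk, hνk⟩ := hw k
  obtain ⟨bl, hνl⟩ := hw l
  obtain ⟨c, hζ⟩ := hwt k
  have hbl : bl ≠ w l := by
    rintro rfl
    exact hwR (by rwa [update_eq_self] at hνl)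
  have hX : update (update (update w j t) k (f c bk (w k))) l bl ∈ R := by
    convert hinv _ _ _ hζ hνk hνl using 1
    funext a
    simp only [update_apply]
    split_ifs <;> simp_all
  rcases hcons c bk (w k) with hx | hx | hx <;> rw [hx] at hX
  · refine absurd (hR.update_inj hX ?_) hbl
    rwa [update_eq_self_iff.2 (by simp [hlj, hkl.symm])]
  · have hY : update (update (update w k bk) l bl) j bj ∈ R := by
      convert hinv _ _ _ hνk hνl hνj using 1
      funext a
      simp only [update_apply]
      split_ifs <;> simp_all
    rw [update_comm hkj.symm, update_comm hlj.symm] at hX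
    rwa [hR.update_inj hX hY]
  · rw [update_eq_self_iff (a := k) |>.2 (by simp [hkj]), update_comm hlj.symm] at hX
    exact absurd (hR.update_inj hX (by rwa [update_eq_self_iff.2 (by simp [hlj.symm])])) ht

theorem IsCongOn.rel_of_update_mem_critical {A : Fin n → Set α} {j : Fin n} {θ : α → α → Prop}
    (hθ : IsCongOn f (A j) θ) (hθ' : NontrivialRel θ) (hdom : ∀ t ∈ R, ∀ i, t i ∈ A i)
    (hinv : PreservesSet f R) (hsub : ∀ a ∈ A j, ∃ t ∈ R, t j = a) (hR : IsFunctionalRel R)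
    {s : Fin n → α} (hmax : ∀ S : Set (Fin n → α), (∀ t ∈ S, ∀ i, t i ∈ A i) →
        PreservesSet f S → R ⊂ S → s ∈ S)
    {b : α} (hb : update s j b ∈ R) : θ (s j) b := by
  -- moving the `j`-th coordinate of tuples of `R` within `θ`-classes gives a proper invariant
  -- extension of `R`, which therefore contains `s`
  obtain ⟨hθdom, hθrefl, hθsymm, -, hθf⟩ := hθ
  set S : Set (Fin n → α) := {u | ∃ r ∈ R, ∃ x, θ (r j) x ∧ update r j x = u}
  have hRS : R ⊆ S := fun r hr => ⟨r, hr, r j, hθrefl _ (hdom r hr j), update_eq_self j r⟩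
  have hSdom : ∀ u ∈ S, ∀ i, u i ∈ A i := by
    rintro _ ⟨r, hr, x, hx, rfl⟩ i
    by_cases hi : i = j
    · subst hi; simpa using (hθdom _ _ hx).2
    · simpa [hi] using hdom r hr i
  have hSf : PreservesSet f S := by
    rintro _ _ _ ⟨r₁, h₁, x₁, hx₁, rfl⟩ ⟨r₂, h₂, x₂, hx₂, rfl⟩ ⟨r₃, h₃, x₃, hx₃, rfl⟩
    exact ⟨_, hinv _ _ _ h₁ h₂ h₃, _, hθf _ _ _ _ _ _ hx₁ hx₂ hx₃,
      (pointwise_update f r₁ r₂ r₃ j x₁ x₂ x₃).symm⟩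
  have hRS' : R ⊂ S := by
    obtain ⟨c, d, hcd, hne⟩ := hθ'
    obtain ⟨r, hr, rfl⟩ := hsub c (hθdom _ _ hcd).1
    refine (Set.ssubset_iff_of_subset hRS).2 ⟨update r j d, ⟨r, hr, d, hcd, rfl⟩, fun h => ?_⟩
    exact hne (hR.update_inj (by rwa [update_eq_self]) h)
  obtain ⟨r, hr, x, hx, hrs⟩ := hmax S hSdom hSf hRS'
  subst hrs
  rw [update_idem] at hb
  rw [update_self, ← hR.update_inj (by rwa [update_eq_self]) hb]
  exact hθsymm _ _ hx

theorem GenRel.exists_update_mem_coordNbhd {A : Fin n → Set α} {j : Fin n}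
    (hinv : PreservesSet f R) (hsub : ∀ a ∈ A j, ∃ t ∈ R, t j = a) {s : Fin n → α} {b : α}
    (hs : s ∈ coordNbhd R) (hb : update s j b ∈ R) {x y : α}
    (h : GenRel f (A j) (s j) b x y) : ∃ r ∈ R, r j = y ∧ update r j x ∈ coordNbhd R := by
  induction h with
  | refl hx =>
    obtain ⟨r, hr, rfl⟩ := hsub _ hx
    exact ⟨r, hr, rfl, by simpa using subset_coordNbhd R hr⟩
  | gen => exact ⟨update s j b, hb, update_self .., by simpa using hs⟩
  | map _ _ _ ih₁ ih₂ ih₃ =>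
    obtain ⟨r₁, h₁, rfl, hu₁⟩ := ih₁
    obtain ⟨r₂, h₂, rfl, hu₂⟩ := ih₂
    obtain ⟨r₃, h₃, rfl, hu₃⟩ := ih₃
    refine ⟨_, hinv _ _ _ h₁ h₂ h₃, rfl, ?_⟩
    exact pointwise_update f r₁ r₂ r₃ j _ _ _ ▸ hinv.coordNbhd _ _ _ hu₁ hu₂ hu₃

theorem GenRel.eq_of_ne {A : Fin n → Set α} {j : Fin n} (hcons : IsConservativeOp f)
    (hmin : IsMinorityOp f) (hinv : PreservesSet f R) (hR : IsFunctionalRel R) (hn : 3 ≤ n)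
    (hsub : ∀ a ∈ A j, ∃ t ∈ R, t j = a) {s : Fin n → α} {b : α}
    (hs : s ∈ coordNbhd R) (hb : update s j b ∈ R) {x y y' : α}
    (h : GenRel f (A j) (s j) b x y) (h' : GenRel f (A j) (s j) b x y')
    (hy : x ≠ y) (hy' : x ≠ y') : y = y' := by
  obtain ⟨r, hr, rfl, hw⟩ := h.exists_update_mem_coordNbhd hinv hsub hs hb
  obtain ⟨r', hr', rfl, hw'⟩ := h'.exists_update_mem_coordNbhd hinv hsub hs hb
  -- `f (update r' j x) r' (update r j x)` moves the `j`-th coordinate of `update r j x` to `y'`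
  have hT : update (update r j x) j (r' j) ∈ coordNbhd R := by
    convert hinv.coordNbhd _ _ _ hw' (subset_coordNbhd R hr') hw using 1
    funext i
    by_cases hi : i = j
    · subst hi; simp [(hmin _ _).2.1]
    · simp [hi, (hmin _ _).1]
  rcases mem_or_update_mem_of_mem_coordNbhd hcons hmin hinv hR hn hw hT (by simpa using hy'.symm)
    with hwR | hTR
  · exact absurd (hR.update_inj hwR (by rwa [update_eq_self])) hy
  · rw [update_idem] at hTR
    exact hR.update_inj (by rwa [update_eq_self]) hTR

end Critical

theorem stmt_15_general {α : Type*} (f : α → α → α → α)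
    (hcons : IsConservativeOp f) (hmin : IsMinorityOp f)
    (n : ℕ) (hn : 3 ≤ n) (A : Fin n → Set α)
    (μ : Fin n → α → α → Prop)
    (hμ : ∀ i, IsAtomicCongOn f (A i) (μ i))
    (B : Fin n → Set α)
    (hB : ∀ i, ∃ x y, x ≠ y ∧ μ i x y ∧ B i = {z | μ i x z})
    (R : Set (Fin n → α))
    (hdom : ∀ t ∈ R, ∀ i, t i ∈ A i)
    (hinv : PreservesSet f R)
    (hsub : ∀ (i : Fin n), ∀ a ∈ A i, ∃ t ∈ R, t i = a)
    (hfun : ∀ t ∈ R, ∀ t' ∈ R, ∀ i : Fin n,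
        (∀ j, j ≠ i → t j = t' j) → t = t')
    (s : Fin n → α) (hs : s ∉ R)
    (hmax : ∀ S : Set (Fin n → α), (∀ t ∈ S, ∀ i, t i ∈ A i) →
        PreservesSet f S → R ⊂ S → s ∈ S)
    (happ : ∀ i : Fin n, ∃ t ∈ R, ∀ j, j ≠ i → t j = s j) :
    ∀ i : Fin n, (B i).ncard = 2 := by
  intro j
  have hR : IsFunctionalRel R := hfun
  have hs_nbhd : s ∈ coordNbhd R := fun i => by
    obtain ⟨t, ht, hts⟩ := happ i
    exact ⟨t i, by rwa [update_eq_iff.2 ⟨rfl, fun a ha => (hts a ha).symm⟩]⟩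
  obtain ⟨b, hb⟩ := hs_nbhd j
  obtain ⟨hμj, hμj_nt, hμj_min⟩ := hμ j
  have hsb : μ j (s j) b :=
    hμj.rel_of_update_mem_critical hμj_nt hdom hinv (hsub j) hR hmax hb
  obtain ⟨hμj_dom, hμj_refl, -, -, hμj_f⟩ := hμj
  have hsb_ne : s j ≠ b := fun h => hs (by rwa [← h, update_eq_self] at hb)
  have hEμ : ∀ x y, GenRel f (A j) (s j) b x y ↔ μ j x y :=
    hμj_min _ (GenRel.isCongOn hcons hmin.isMaltsevOp_s15 (hμj_dom _ _ hsb).1 (hμj_dom _ _ hsb).2)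
      ⟨_, _, .gen, hsb_ne⟩ fun _ _ h => h.le hμj_refl hsb hμj_f
  obtain ⟨x, y, hxy, hμxy, hBj⟩ := hB j
  rw [hBj]
  refine ncard_setOf_rel_eq_two (hμj_refl x (hμj_dom _ _ hμxy).1) hμxy hxy fun z hz hzx => ?_
  exact (GenRel.eq_of_ne hcons hmin hinv hR hn (hsub j) hs_nbhd hb ((hEμ _ _).2 hμxy)
    ((hEμ _ _).2 hz) hxy (Ne.symm hzx)).symm

/-- For a subdirect functional multisorted critical relation of arity `n ≥ 3`
over subdirectly irreducible subalgebras of a finite conservative minority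
algebra, the nontrivial block of each monolith has exactly two elements. -/
theorem stmt_15 {α : Type*} [Fintype α] (f : α → α → α → α)
    (hcons : IsConservativeOp f) (hmin : IsMinorityOp f)
    (n : ℕ) (hn : 3 ≤ n) (A : Fin n → Set α)
    (μ : Fin n → α → α → Prop)
    (hμ : ∀ i, IsAtomicCongOn f (A i) (μ i))
    (hSI : ∀ i, ∀ μ' : α → α → Prop, IsAtomicCongOn f (A i) μ' →
        ∀ x y, μ' x y ↔ μ i x y)
    (B : Fin n → Set α)
    (hB : ∀ i, ∃ x y, x ≠ y ∧ μ i x y ∧ B i = {z | μ i x z})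
    (R : Set (Fin n → α))
    (hdom : ∀ t ∈ R, ∀ i, t i ∈ A i)
    (hinv : PreservesSet f R)
    (hsub : ∀ (i : Fin n), ∀ a ∈ A i, ∃ t ∈ R, t i = a)
    (hfun : ∀ t ∈ R, ∀ t' ∈ R, ∀ i : Fin n,
        (∀ j, j ≠ i → t j = t' j) → t = t')
    (s : Fin n → α) (hsdom : ∀ i, s i ∈ A i) (hs : s ∉ R)
    (hmax : ∀ S : Set (Fin n → α), (∀ t ∈ S, ∀ i, t i ∈ A i) →
        PreservesSet f S → R ⊂ S → s ∈ S)
    (happ : ∀ i : Fin n, ∃ t ∈ R, ∀ j, j ≠ i → t j = s j) :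
    ∀ i : Fin n, (B i).ncard = 2 :=
  stmt_15_general f hcons hmin n hn A μ hμ B hB R hdom hinv hsub hfun s hs hmax happ
end
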